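/- arXiv:1910.08572 — 4 statements merged into one kernel-verified Lean document; each statement's English description precedes it below -/
import Mathlib

section
/- Summation over nontrivial characters: For every finite field F_q, every nontrivial additive character ψ : (F_q,+) → ℂˣ and every integer n ≥ 1, one has Σ_{χ nontrivial} g(ψ, χ)^n = (−1)^{n+1} + (q − 1) · Kl_n(1, q), where the sum runs over all nontrivial multiplicative characters χ : F_q^× → ℂˣ. -/
open Finset
open scoped Classical

instance {F : Type*} [Field F] [Fintype F] : Finite (Fˣ →* ℂˣ) :=
  Finite.of_equiv _ MulChar.equivToUnitHom

noncomputable instance {F : Type*} [Field F] [Fintype F] : Fintype (Fˣ →* ℂˣ) :=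
  Fintype.ofFinite _

/-- The Gauss sum `g(ψ, χ) = ∑_{x ∈ F_q^×} ψ(x) χ(x)`. -/
noncomputable def gaussSum' {F : Type*} [Field F] [Fintype F]
    (ψ : AddChar F ℂ) (χ : Fˣ →* ℂˣ) : ℂ :=
  ∑ x : Fˣ, ψ (x : F) * (χ x : ℂ)

/-- The Kloosterman sum `Kl_n(a, q) = ∑_{x₁⋯xₙ = a, xᵢ ∈ F_q^×} ψ(x₁ + ⋯ + xₙ)`. -/
noncomputable def Kl {F : Type*} [Field F] [Fintype F]
    (ψ : AddChar F ℂ) (n : ℕ) (a : Fˣ) : ℂ :=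
  ∑ v ∈ Finset.univ.filter (fun v : Fin n → Fˣ => ∏ i, v i = a),
    ψ (∑ i, ((v i : F)))

section Aux

variable {F : Type*} [Field F] [Fintype F]

omit [Fintype F] in
lemma addChar_map_sum {ι : Type*} (ψ : AddChar F ℂ) (s : Finset ι) (f : ι → F) :
    ψ (∑ i ∈ s, f i) = ∏ i ∈ s, ψ (f i) := by
  induction s using Finset.cons_induction with
  | empty => simp
  | cons a s h ih =>
    rw [Finset.sum_cons, Finset.prod_cons, ψ.map_add_eq_mul, ih]

lemma card_char : (Fintype.card (Fˣ →* ℂˣ) : ℂ) = (Fintype.card Fˣ : ℂ) := by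
  have : NeZero (Monoid.exponent Fˣ) := ⟨Monoid.exponent_ne_zero_of_finite⟩
  obtain ⟨e⟩ := CommGroup.monoidHom_mulEquiv_of_hasEnoughRootsOfUnity Fˣ ℂ
  rw [Fintype.card_congr e.toEquiv]

lemma orth (a : Fˣ) :
    ∑ χ : Fˣ →* ℂˣ, ((χ a : ℂˣ) : ℂ)
      = if a = 1 then (Fintype.card Fˣ : ℂ) else 0 := by
  split_ifs with h
  · rw [← card_char]
    simp [h]
  · have : NeZero (Monoid.exponent Fˣ) := ⟨Monoid.exponent_ne_zero_of_finite⟩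
    obtain ⟨φ, hφ⟩ := CommGroup.exists_apply_ne_one_of_hasEnoughRootsOfUnity Fˣ ℂ h
    have key : ((φ a : ℂˣ) : ℂ) * ∑ χ : Fˣ →* ℂˣ, ((χ a : ℂˣ) : ℂ)
        = ∑ χ : Fˣ →* ℂˣ, ((χ a : ℂˣ) : ℂ) := by
      rw [Finset.mul_sum]
      exact Fintype.sum_equiv (Equiv.mulLeft φ) _ _ (fun χ => by
        rw [Equiv.coe_mulLeft, MonoidHom.mul_apply, Units.val_mul])
    have hφ' : ((φ a : ℂˣ) : ℂ) ≠ 1 := by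
      exact fun h => hφ (Units.val_eq_one.mp h)
    by_contra hS
    exact hφ' (mul_right_cancel₀ hS (by rw [key, one_mul]))

lemma gauss_pow (ψ : AddChar F ℂ) (χ : Fˣ →* ℂˣ) (n : ℕ) :
    gaussSum' ψ χ ^ n
      = ∑ v : Fin n → Fˣ, ψ (∑ i, ((v i : F))) * ((χ (∏ i, v i) : ℂˣ) : ℂ) := by
  rw [gaussSum', Fintype.sum_pow]
  refine Finset.sum_congr rfl fun v _ => ?_
  rw [addChar_map_sum, map_prod]
  push_cast
  rw [← Finset.prod_mul_distrib]

lemma sum_units_psi (ψ : AddChar F ℂ) (hψ : ψ ≠ 1) : ∑ x : Fˣ, ψ (x : F) = -1 := by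
  have h0 : ∑ x : F, ψ x = 0 :=
    AddChar.sum_eq_zero_iff_ne_zero.mpr (by rwa [← AddChar.one_eq_zero])
  have h1 : ∑ x : Fˣ, ψ (x : F) = ∑ x ∈ Finset.univ.erase (0 : F), ψ x := by
    refine Finset.sum_bij' (fun u _ => (u : F))
      (fun x hx => Units.mk0 x (Finset.mem_erase.mp hx).1) ?_ ?_ ?_ ?_ ?_
    all_goals intros; simp_all [Finset.mem_erase]
  rw [h1, Finset.sum_erase_eq_sub (Finset.mem_univ (0 : F)), h0, ψ.map_zero_eq_one]
  ring

end Aux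

/-- **Summation over nontrivial characters.** For every finite field `F_q`, nontrivial
additive character `ψ` and `n ≥ 1`:
`∑_{χ ≠ 1} g(ψ, χ)^n = (−1)^{n+1} + (q − 1) · Kl_n(1, q)`. -/
theorem sum_gauss_pow_over_nontrivial_characters
    {F : Type*} [Field F] [Fintype F] (ψ : AddChar F ℂ) (hψ : ψ ≠ 1)
    (n : ℕ) (hn : 1 ≤ n) :
    ∑ χ ∈ Finset.univ.filter (fun χ : Fˣ →* ℂˣ => χ ≠ 1), gaussSum' ψ χ ^ n
      = (-1 : ℂ) ^ (n + 1) + ((Fintype.card F : ℂ) - 1) * Kl ψ n 1 := by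
  have hcardU : (Fintype.card Fˣ : ℂ) = (Fintype.card F : ℂ) - 1 := by
    rw [Fintype.card_units, Nat.cast_sub Fintype.card_pos, Nat.cast_one]
  have htriv : gaussSum' ψ (1 : Fˣ →* ℂˣ) = -1 := by
    rw [gaussSum']
    simp only [MonoidHom.one_apply, Units.val_one, mul_one]
    exact sum_units_psi ψ hψ
  have hfull : ∑ χ : Fˣ →* ℂˣ, gaussSum' ψ χ ^ n
      = ((Fintype.card F : ℂ) - 1) * Kl ψ n 1 := by
    simp_rw [gauss_pow]
    rw [Finset.sum_comm]
    have : ∀ v : Fin n → Fˣ,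
        ∑ χ : Fˣ →* ℂˣ, ψ (∑ i, ((v i : F))) * ((χ (∏ i, v i) : ℂˣ) : ℂ)
          = if ∏ i, v i = 1 then ψ (∑ i, ((v i : F))) * (Fintype.card Fˣ : ℂ) else 0 := by
      intro v
      rw [← Finset.mul_sum, orth, mul_ite, mul_zero]
    simp_rw [this]
    rw [← Finset.sum_filter, ← Finset.sum_mul, mul_comm, hcardU, Kl]
  have hsplit : Finset.univ.filter (fun χ : Fˣ →* ℂˣ => χ ≠ 1)
      = Finset.univ.erase (1 : Fˣ →* ℂˣ) := Finset.filter_ne' _ _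
  rw [hsplit, Finset.sum_erase_eq_sub (Finset.mem_univ (1 : Fˣ →* ℂˣ)), hfull, htriv,
    pow_succ]
  ring
end

section
/- Weyl-sum bound for powers of Gauss sums: Let F_q be a finite field with q > 2 elements, ψ : (F_q,+) → ℂˣ a nontrivial additive character, and n ≥ 1 an integer. Assume that |Kl_n(a, q)| ≤ n · q^{(n−1)/2} for every a ∈ F_q^×. Then |(1/(q^{n/2}(q−2))) Σ_{χ nontrivial} g(ψ, χ)^n| ≤ (2n + 1)/√q, the sum running over all nontrivial multiplicative characters χ : F_q^× → ℂˣ. -/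
/-!
Multiplying out `g(ψ, χ)^n` and grouping the terms by the product of the variables gives
`g(ψ, χ)^n = ∑ₐ χ(a) Kl_n(a)`, so by orthogonality of characters the sum over all `χ` is
`(q - 1) Kl_n(1)`. The trivial character contributes `g(ψ, 1)^n = (-1)^n`, since `ψ` sums to
zero over `F_q`. Hence the sum over `χ ≠ 1` has absolute value at most
`(q - 1) n q^{(n-1)/2} + 1`, which is at most `(2n + 1)(q - 2) q^{n/2} / √q` once `q ≥ 3`.
-/

open Finset
open scoped Classical

theorem AddChar.map_sum_eq_prod {A M ι : Type*} [AddCommMonoid A] [CommMonoid M]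
    (ψ : AddChar A M) (s : Finset ι) (f : ι → A) :
    ψ (∑ i ∈ s, f i) = ∏ i ∈ s, ψ (f i) :=
  -- a product in `Multiplicative A` is definitionally the corresponding sum in `A`
  map_prod ψ.toMonoidHom (fun i => Multiplicative.ofAdd (f i)) s

theorem MonoidHom.sum_units_apply_eq_ite {G R : Type*} [CommGroup G] [Finite G] [DecidableEq G]
    [CommRing R] [IsDomain R] [HasEnoughRootsOfUnity R (Monoid.exponent G)]
    [Fintype (G →* Rˣ)] (a : G) :
    ∑ χ : G →* Rˣ, (χ a : R) = if a = 1 then (Nat.card G : R) else 0 := by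
  split_ifs with ha
  · simp [ha, ← Nat.card_eq_fintype_card, CommGroup.card_monoidHom_of_hasEnoughRootsOfUnity]
  · obtain ⟨φ, hφ⟩ := CommGroup.exists_apply_ne_one_of_hasEnoughRootsOfUnity G R ha
    refine eq_zero_of_mul_eq_self_left (b := (φ a : R)) (by simpa [Units.val_eq_one] using hφ) ?_
    rw [mul_sum]
    exact Fintype.sum_bijective _ (Group.mulLeft_bijective φ) _ _ fun χ ↦ rfl

section GaussSums

variable {F : Type*} [Field F] [Fintype F] (ψ : AddChar F ℂ) (n : ℕ)

theorem gaussSum'_pow_eq_sum_mul_Kl (χ : Fˣ →* ℂˣ) :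
    gaussSum' ψ χ ^ n = ∑ a : Fˣ, (χ a : ℂ) * Kl ψ n a := by
  rw [gaussSum', Fintype.sum_pow,
    ← sum_fiberwise univ (fun v : Fin n → Fˣ => ∏ i, v i)]
  refine sum_congr rfl fun a _ => ?_
  rw [Kl, mul_sum]
  refine sum_congr rfl fun v hv => ?_
  have hχv : ∏ i, (χ (v i) : ℂ) = χ a := by
    rw [← (mem_filter.mp hv).2, map_prod, Units.coe_prod]
  rw [prod_mul_distrib, ← AddChar.map_sum_eq_prod, hχv, mul_comm]

theorem sum_gaussSum'_pow :
    ∑ χ : Fˣ →* ℂˣ, gaussSum' ψ χ ^ n = ((Fintype.card F : ℂ) - 1) * Kl ψ n 1 := by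
  simp_rw [gaussSum'_pow_eq_sum_mul_Kl]
  rw [sum_comm]
  simp_rw [← sum_mul, MonoidHom.sum_units_apply_eq_ite, ite_mul, zero_mul,
    sum_ite_eq', mem_univ, if_true, Nat.card_eq_fintype_card, Fintype.card_units,
    Nat.cast_sub Fintype.card_pos, Nat.cast_one]

variable {ψ}

theorem gaussSum'_one (hψ : ψ ≠ 1) : gaussSum' ψ 1 = -1 := by
  have hunits : ∑ x : Fˣ, ψ x = ∑ x ∈ {0}ᶜ, ψ x :=
    sum_bij (fun u _ => (u : F)) (by simp) (fun _ _ _ _ => Units.ext)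
      (fun x hx => ⟨(IsUnit.mk0 x (by simpa using hx)).unit, mem_univ _, rfl⟩)
      (fun _ _ => rfl)
  have hsplit := sum_compl_add_sum {0} (fun x => ψ x)
  rw [AddChar.sum_eq_zero_of_ne_one hψ, sum_singleton, AddChar.map_zero_eq_one] at hsplit
  simp only [gaussSum', MonoidHom.one_apply, Units.val_one, mul_one, hunits]
  linear_combination hsplit

theorem sum_ne_one_gaussSum'_pow (hψ : ψ ≠ 1) :
    ∑ χ ∈ univ.filter (fun χ : Fˣ →* ℂˣ => χ ≠ 1), gaussSum' ψ χ ^ n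
      = ((Fintype.card F : ℂ) - 1) * Kl ψ n 1 - (-1) ^ n := by
  rw [filter_ne', sum_erase_eq_sub (mem_univ _), sum_gaussSum'_pow,
    gaussSum'_one hψ]

theorem norm_sum_ne_one_gaussSum'_pow_le (hψ : ψ ≠ 1) {B : ℝ} (hB : ‖Kl ψ n 1‖ ≤ B) :
    ‖∑ χ ∈ univ.filter (fun χ : Fˣ →* ℂˣ => χ ≠ 1), gaussSum' ψ χ ^ n‖
      ≤ ((Fintype.card F : ℝ) - 1) * B + 1 := by
  have hq : (1 : ℝ) ≤ Fintype.card F := by exact_mod_cast Fintype.card_pos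
  have hcoef : ‖((Fintype.card F : ℂ) - 1)‖ = (Fintype.card F : ℝ) - 1 := by
    rw [← Complex.ofReal_natCast, ← Complex.ofReal_one, ← Complex.ofReal_sub, Complex.norm_real,
      Real.norm_of_nonneg (by linarith)]
  rw [sum_ne_one_gaussSum'_pow n hψ]
  calc _ ≤ ‖((Fintype.card F : ℂ) - 1) * Kl ψ n 1‖ + ‖((-1 : ℂ)) ^ n‖ := norm_sub_le _ _
    _ ≤ _ := by
      rw [norm_mul, hcoef, norm_pow, norm_neg, norm_one, one_pow]
      gcongr

end GaussSums

theorem sub_one_mul_rpow_add_one_le {q n : ℝ} (hq : 3 ≤ q) (hn : 1 ≤ n) :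
    (q - 1) * (n * q ^ ((n - 1) / 2)) + 1 ≤ (2 * n + 1) / √q * (q ^ (n / 2) * (q - 2)) := by
  have hq0 : 0 < q := by linarith
  have hs0 : 0 < √q := Real.sqrt_pos.mpr hq0
  have hsA : √q ≤ q ^ (n / 2) := by
    rw [Real.sqrt_eq_rpow]
    exact Real.rpow_le_rpow_of_exponent_le (by linarith) (by linarith)
  have hsplit : q ^ ((n - 1) / 2) = q ^ (n / 2) / √q := by
    rw [Real.sqrt_eq_rpow, ← Real.rpow_sub hq0]
    ring_nf
  have hfactor : (q - 1) * n + 1 ≤ (2 * n + 1) * (q - 2) := by nlinarith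
  rw [hsplit, div_mul_eq_mul_div, le_div_iff₀ hs0]
  calc ((q - 1) * (n * (q ^ (n / 2) / √q)) + 1) * √q
      = (q - 1) * n * q ^ (n / 2) + √q := by field_simp
    _ ≤ ((q - 1) * n + 1) * q ^ (n / 2) := by linarith
    _ ≤ (2 * n + 1) * (q ^ (n / 2) * (q - 2)) := by
      nlinarith [mul_le_mul_of_nonneg_right hfactor (Real.rpow_nonneg hq0.le (n / 2))]

/-- **Weyl-sum bound for powers of Gauss sums.** If `q > 2`, `ψ` is a nontrivial additive
character, `n ≥ 1`, and `|Kl_n(a, q)| ≤ n q^{(n−1)/2}` for all `a ∈ F_q^×`, then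
`|(1/(q^{n/2}(q−2))) ∑_{χ ≠ 1} g(ψ, χ)^n| ≤ (2n + 1)/√q`. -/
theorem weyl_sum_bound_for_gauss_powers
    {F : Type*} [Field F] [Fintype F] (hq : 2 < Fintype.card F)
    (ψ : AddChar F ℂ) (hψ : ψ ≠ 1) (n : ℕ) (hn : 1 ≤ n)
    (hKl : ∀ a : Fˣ, ‖Kl ψ n a‖ ≤ n * (Fintype.card F : ℝ) ^ (((n : ℝ) - 1) / 2)) :
    ‖(1 / ((((Fintype.card F : ℝ) ^ ((n : ℝ) / 2) : ℝ) : ℂ) * ((Fintype.card F : ℂ) - 2))) *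
        ∑ χ ∈ Finset.univ.filter (fun χ : Fˣ →* ℂˣ => χ ≠ 1), gaussSum' ψ χ ^ n‖
      ≤ (2 * n + 1) / Real.sqrt (Fintype.card F) := by
  have hq3 : (3 : ℝ) ≤ Fintype.card F := by exact_mod_cast hq
  set q : ℝ := (Fintype.card F : ℝ)
  have hD : 0 < q ^ ((n : ℝ) / 2) * (q - 2) :=
    mul_pos (Real.rpow_pos_of_pos (by linarith) _) (by linarith)
  have hcoef : ((q ^ ((n : ℝ) / 2) : ℝ) : ℂ) * ((Fintype.card F : ℂ) - 2)
      = ((q ^ ((n : ℝ) / 2) * (q - 2) : ℝ) : ℂ) := by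
    push_cast [q]
    rfl
  rw [hcoef, one_div_mul_eq_div, norm_div, Complex.norm_real, Real.norm_of_nonneg hD.le]
  refine div_le_of_le_mul₀ hD.le (by positivity) ?_
  exact (norm_sum_ne_one_gaussSum'_pow_le n hψ (hKl 1)).trans
    (sub_one_mul_rpow_add_one_le hq3 (by exact_mod_cast hn))
end

section
/- Kloosterman's bound: For every finite field F_q with q elements, every nontrivial additive character ψ : (F_q,+) → ℂˣ and every a ∈ F_q^×, one has |Kl_2(a, q)| < 2 q^{3/4}. -/
/-!
Write `T(m, n) = ∑_{x ∈ F^×} ψ(m x + n x⁻¹)`. Substituting `x ↦ m x` shows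
`T(m, a m⁻¹) = Kl_2(a)` for each of the `q - 1` units `m`, so
`(q - 1) |Kl_2(a)|⁴ ≤ ∑_{m, n} |T(m, n)|⁴`. Writing `|T|⁴ = |T²|²` and using orthogonality of
characters, this fourth moment is `q²` times the number of unit solutions of
`x₁ + x₂ = y₁ + y₂`, `x₁⁻¹ + x₂⁻¹ = y₁⁻¹ + y₂⁻¹`. Unless `x₁ + x₂ = 0`, these force
`x₁ x₂ = y₁ y₂`, hence `{y₁, y₂} = {x₁, x₂}`; so there are at most `3 (q - 1)²` solutions and
`|Kl_2(a)|⁴ ≤ 3 q² (q - 1) < 16 q³`.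
-/

open Finset
open scoped Classical

/-- The Kloosterman sum `Kl_2(a, q) = ∑_{x ∈ F_q^×} ψ(x + a x⁻¹)`. -/
noncomputable def Kl2 {F : Type*} [Field F] [Fintype F]
    (ψ : AddChar F ℂ) (a : Fˣ) : ℂ :=
  ∑ x : Fˣ, ψ ((x : F) + (a : F) * (x : F)⁻¹)

section CharSum

variable {R ι : Type*} [CommRing R] [Fintype ι]

noncomputable def charSum (ψ : AddChar R ℂ) (v : ι → R × R) (c : R × R) : ℂ :=
  ∑ i, ψ (c.1 * (v i).1 + c.2 * (v i).2)

def additiveQuadruples {M : Type*} [Add M] [DecidableEq M] (v : ι → M) :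
    Finset ((ι × ι) × (ι × ι)) :=
  {p | v p.1.1 + v p.1.2 = v p.2.1 + v p.2.2}

theorem sum_addChar_mul_add_mul [Fintype R] {ψ : AddChar R ℂ} (hψ : ψ.IsPrimitive)
    (d : R × R) :
    ∑ c : R × R, ψ (c.1 * d.1 + c.2 * d.2) = if d = 0 then (Fintype.card R : ℂ) ^ 2 else 0 := by
  simp_rw [AddChar.map_add_eq_mul, Fintype.sum_prod_type, ← sum_mul_sum,
    AddChar.sum_mulShift _ hψ, Prod.ext_iff]
  split_ifs <;> simp_all [sq]

theorem sum_norm_charSum_sq [Fintype R] {ψ : AddChar R ℂ} (hψ : ψ.IsPrimitive)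
    (v : ι → R × R) :
    ∑ c : R × R, ‖charSum ψ v c‖ ^ 2 =
      (Fintype.card R : ℝ) ^ 2 * #{p : ι × ι | v p.1 = v p.2} := by
  have hexpand (c : R × R) : (‖charSum ψ v c‖ ^ 2 : ℂ) =
      ∑ p : ι × ι, ψ (c.1 * (v p.1 - v p.2).1 + c.2 * (v p.1 - v p.2).2) := by
    rw [← Complex.mul_conj', charSum, map_sum, Fintype.sum_mul_sum, ← Fintype.sum_prod_type']
    refine Fintype.sum_congr _ _ fun p ↦ ?_
    rw [← AddChar.map_neg_eq_conj, ← AddChar.map_add_eq_mul, Prod.fst_sub, Prod.snd_sub]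
    ring_nf
  apply Complex.ofReal_injective
  push_cast
  simp_rw [hexpand]
  rw [sum_comm]
  simp_rw [sum_addChar_mul_add_mul hψ, sub_eq_zero]
  rw [sum_ite, sum_const_zero, add_zero, sum_const, nsmul_eq_mul, mul_comm]

theorem charSum_sq (ψ : AddChar R ℂ) (v : ι → R × R) (c : R × R) :
    charSum ψ v c ^ 2 = charSum ψ (fun p : ι × ι ↦ v p.1 + v p.2) c := by
  rw [sq, charSum, Fintype.sum_mul_sum, ← Fintype.sum_prod_type', charSum]
  refine Fintype.sum_congr _ _ fun p ↦ ?_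
  rw [← AddChar.map_add_eq_mul, Prod.fst_add, Prod.snd_add]
  ring_nf

theorem sum_norm_charSum_pow_four [Fintype R] {ψ : AddChar R ℂ} (hψ : ψ.IsPrimitive)
    (v : ι → R × R) :
    ∑ c : R × R, ‖charSum ψ v c‖ ^ 4 = (Fintype.card R : ℝ) ^ 2 * #(additiveQuadruples v) := by
  simp_rw [show ∀ z : ℂ, ‖z‖ ^ 4 = ‖z ^ 2‖ ^ 2 from fun z ↦ by rw [norm_pow, ← pow_mul],
    charSum_sq]
  exact sum_norm_charSum_sq hψ fun p : ι × ι ↦ v p.1 + v p.2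

end CharSum

section Field

variable {F : Type*} [Field F]

theorem eq_or_eq_swap_or_add_eq_zero_of_add_eq_of_inv_add_eq {x₁ x₂ y₁ y₂ : F}
    (hx₁ : x₁ ≠ 0) (hx₂ : x₂ ≠ 0) (hy₁ : y₁ ≠ 0) (hy₂ : y₂ ≠ 0)
    (hs : x₁ + x₂ = y₁ + y₂) (ht : x₁⁻¹ + x₂⁻¹ = y₁⁻¹ + y₂⁻¹) :
    (y₁ = x₁ ∧ y₂ = x₂) ∨ (y₁ = x₂ ∧ y₂ = x₁) ∨ x₁ + x₂ = 0 := by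
  by_cases hs₀ : x₁ + x₂ = 0
  · exact Or.inr (Or.inr hs₀)
  -- `x⁻¹ + y⁻¹ = (x + y) / (x y)`, so equal sums and equal reciprocal sums force equal products
  have hp : x₁ * x₂ = y₁ * y₂ := by
    field_simp at ht
    apply mul_left_cancel₀ hs₀
    linear_combination x₁ * x₂ * hs - ht
  have hroot : (y₁ - x₁) * (y₁ - x₂) = 0 := by linear_combination hp - y₁ * hs
  rcases mul_eq_zero.mp hroot with h | h
  · exact Or.inl ⟨sub_eq_zero.mp h, by linear_combination -hs - h⟩
  · exact Or.inr (Or.inl ⟨sub_eq_zero.mp h, by linear_combination -hs - h⟩)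

def hyperbola (x : Fˣ) : F × F := ((x : F), (x : F)⁻¹)

variable [Fintype F]

theorem additiveQuadruples_hyperbola_subset :
    additiveQuadruples (hyperbola (F := F)) ⊆
      (univ.image fun x ↦ (x, x)) ∪ (univ.image fun x ↦ (x, x.swap)) ∪
        (univ.image fun x : Fˣ × Fˣ ↦ ((x.1, -x.1), (x.2, -x.2))) := by
  rintro ⟨⟨x₁, x₂⟩, ⟨y₁, y₂⟩⟩ hp
  simp only [additiveQuadruples, hyperbola, mem_filter, mem_univ, true_and, Prod.mk_add_mk,
    Prod.ext_iff] at hp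
  rcases eq_or_eq_swap_or_add_eq_zero_of_add_eq_of_inv_add_eq x₁.ne_zero x₂.ne_zero
    y₁.ne_zero y₂.ne_zero hp.1 hp.2 with ⟨h₁, h₂⟩ | ⟨h₁, h₂⟩ | h
  · simp [Units.ext h₁, Units.ext h₂]
  · simp [Units.ext h₁, Units.ext h₂]
  · have hx : x₂ = -x₁ := Units.ext (by simp; linear_combination h)
    have hy : y₂ = -y₁ := Units.ext (by simp; linear_combination hp.1.symm.trans h)
    simp [hx, hy]

theorem card_additiveQuadruples_hyperbola_le :
    #(additiveQuadruples (hyperbola (F := F))) ≤ 3 * Fintype.card Fˣ ^ 2 := by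
  calc _ ≤ _ := card_le_card additiveQuadruples_hyperbola_subset
    _ ≤ Fintype.card (Fˣ × Fˣ) + Fintype.card (Fˣ × Fˣ) + Fintype.card (Fˣ × Fˣ) :=
      (card_union_le _ _).trans <| add_le_add ((card_union_le _ _).trans <|
        add_le_add card_image_le card_image_le) card_image_le
    _ = 3 * Fintype.card Fˣ ^ 2 := by rw [Fintype.card_prod]; ring

theorem charSum_hyperbola_eq_Kl2 (ψ : AddChar F ℂ) (a m : Fˣ) :
    charSum ψ hyperbola ((m : F), (a : F) * (m : F)⁻¹) = Kl2 ψ a := by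
  refine Fintype.sum_bijective (m * ·) (Group.mulLeft_bijective m) _ _ fun x ↦ ?_
  simp only [hyperbola, Units.val_mul]
  congr 1
  field_simp

theorem card_units_mul_norm_Kl2_pow_four_le (ψ : AddChar F ℂ) (a : Fˣ) :
    Fintype.card Fˣ * ‖Kl2 ψ a‖ ^ 4 ≤ ∑ c, ‖charSum ψ hyperbola c‖ ^ 4 := by
  let e : Fˣ ↪ F × F :=
    ⟨fun m ↦ ((m : F), (a : F) * (m : F)⁻¹), fun m m' h ↦ Units.ext (congrArg Prod.fst h)⟩
  calc (Fintype.card Fˣ : ℝ) * ‖Kl2 ψ a‖ ^ 4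
        = ∑ m : Fˣ, ‖charSum ψ hyperbola ((m : F), (a : F) * (m : F)⁻¹)‖ ^ 4 := by
        simp [charSum_hyperbola_eq_Kl2]
    _ = ∑ c ∈ univ.map e, ‖charSum ψ hyperbola c‖ ^ 4 :=
      (sum_map univ e fun c ↦ ‖charSum ψ hyperbola c‖ ^ 4).symm
    _ ≤ _ := sum_le_univ_sum_of_nonneg fun _ ↦ by positivity

theorem norm_Kl2_pow_four_le {ψ : AddChar F ℂ} (hψ : ψ ≠ 1) (a : Fˣ) :
    ‖Kl2 ψ a‖ ^ 4 ≤ 3 * (Fintype.card F : ℝ) ^ 2 * Fintype.card Fˣ := by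
  refine le_of_mul_le_mul_left ?_ (by positivity : (0 : ℝ) < Fintype.card Fˣ)
  calc _ ≤ ∑ c, ‖charSum ψ hyperbola c‖ ^ 4 := card_units_mul_norm_Kl2_pow_four_le ψ a
    _ = (Fintype.card F : ℝ) ^ 2 * #(additiveQuadruples (hyperbola (F := F))) :=
      sum_norm_charSum_pow_four (.of_ne_one hψ) _
    _ ≤ (Fintype.card F : ℝ) ^ 2 * (3 * (Fintype.card Fˣ : ℝ) ^ 2) := by
      gcongr; exact_mod_cast card_additiveQuadruples_hyperbola_le
    _ = _ := by ring

end Field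

/-- **Kloosterman's bound.** For every finite field `F_q`, every nontrivial additive
character `ψ` and every `a ∈ F_q^×`, `|Kl_2(a, q)| < 2 q^{3/4}`. -/
theorem kloosterman_bound
    {F : Type*} [Field F] [Fintype F] (ψ : AddChar F ℂ) (hψ : ψ ≠ 1) (a : Fˣ) :
    ‖Kl2 ψ a‖ < 2 * (Fintype.card F : ℝ) ^ ((3 : ℝ) / 4) := by
  have huq : (Fintype.card Fˣ : ℝ) ≤ Fintype.card F := by
    exact_mod_cast Fintype.card_le_of_injective _ Units.val_injective
  have hq : (0 : ℝ) < Fintype.card F := Nat.cast_pos.mpr Fintype.card_pos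
  have hfourth : ‖Kl2 ψ a‖ ^ 4 < 16 * (Fintype.card F : ℝ) ^ 3 :=
    calc ‖Kl2 ψ a‖ ^ 4 ≤ 3 * (Fintype.card F : ℝ) ^ 2 * Fintype.card Fˣ :=
          norm_Kl2_pow_four_le hψ a
      _ ≤ 3 * (Fintype.card F : ℝ) ^ 2 * Fintype.card F := by gcongr
      _ < 16 * (Fintype.card F : ℝ) ^ 3 := by nlinarith [pow_pos hq 3]
  have hbound :
      (2 * (Fintype.card F : ℝ) ^ ((3 : ℝ) / 4)) ^ 4 = 16 * (Fintype.card F : ℝ) ^ 3 := by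
    rw [mul_pow, ← Real.rpow_natCast (_ ^ _), ← Real.rpow_mul hq.le]
    norm_num
  exact lt_of_pow_lt_pow_left₀ 4 (by positivity) (hbound ▸ hfourth)
end

section
/- Nonvanishing of Kloosterman sums (footnote 2): Let q = p^f with p prime, let ψ : (F_q,+) → ℂˣ be a nontrivial additive character and let ζ ∈ ℂ be a primitive p-th root of unity such that all values of ψ lie in the subring ℤ[ζ] of ℂ generated by ζ. Then for every a ∈ F_q^×, the Kloosterman sum Kl_2(a, q) lies in ℤ[ζ], satisfies Kl_2(a, q) ≡ −1 modulo the ideal (1 − ζ)ℤ[ζ], and in particular Kl_2(a, q) ≠ 0. -/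
open Finset
open scoped Classical

/-- **Nonvanishing of Kloosterman sums (footnote 2).** Let `q = p^f` with `p` prime, `ψ` a
nontrivial additive character of `F_q` and `ζ ∈ ℂ` a primitive `p`-th root of unity such that
all values of `ψ` lie in the subring `ℤ[ζ]` of `ℂ` generated by `ζ`. Then for every
`a ∈ F_q^×`, `Kl_2(a, q)` lies in `ℤ[ζ]`, is congruent to `−1` modulo the ideal
`(1 − ζ)ℤ[ζ]`, and in particular `Kl_2(a, q) ≠ 0`. -/
theorem kloosterman_nonvanishing
    {F : Type*} [Field F] [Fintype F] (p f : ℕ) (hp : p.Prime)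
    (hq : Fintype.card F = p ^ f)
    (ψ : AddChar F ℂ) (hψ : ψ ≠ 1)
    (ζ : ℂ) (hζ : IsPrimitiveRoot ζ p)
    (hval : ∀ x : F, ψ x ∈ Subring.closure ({ζ} : Set ℂ)) (a : Fˣ) :
    Kl2 ψ a ∈ Subring.closure ({ζ} : Set ℂ) ∧
      (∃ z ∈ Subring.closure ({ζ} : Set ℂ), Kl2 ψ a - (-1) = (1 - ζ) * z) ∧
      Kl2 ψ a ≠ 0 := by
  have hp2 : 1 < p := hp.one_lt
  haveI : Fact p.Prime := ⟨hp⟩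
  haveI : NeZero p := ⟨hp.ne_zero⟩
  set S := Subring.closure ({ζ} : Set ℂ) with hS
  have hζS : ζ ∈ S := Subring.subset_closure rfl
  -- f ≥ 1
  have hf : f ≠ 0 := by
    intro h
    rw [h, pow_zero] at hq
    exact absurd hq (by have := Fintype.one_lt_card (α := F); omega)
  -- (p : F) = 0
  have hpF : (p : F) = 0 := by
    have h0 : ((p ^ f : ℕ) : F) = 0 := by
      rw [← hq]; exact FiniteField.cast_card_eq_zero F
    rw [Nat.cast_pow] at h0
    exact pow_eq_zero_iff hf |>.mp h0
  -- every value of ψ is a p-th root of unity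
  have hroot : ∀ y : F, (ψ y) ^ p = 1 := by
    intro y
    rw [← AddChar.map_nsmul_eq_pow, nsmul_eq_mul, hpF, zero_mul, AddChar.map_zero_eq_one]
  -- 1 - ζ^k lies in (1-ζ)S
  have hA : ∀ k : ℕ, ∃ z ∈ S, (1 : ℂ) - ζ ^ k = (1 - ζ) * z := by
    intro k
    refine ⟨∑ j ∈ range k, ζ ^ j, sum_mem fun j _ => pow_mem hζS j, ?_⟩
    have := geom_sum_mul ζ k
    have h2 : (1 - ζ) * ∑ j ∈ range k, ζ ^ j = -((∑ j ∈ range k, ζ ^ j) * (ζ - 1)) := by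
      ring
    rw [h2, this]; ring
  -- ψ y - 1 lies in (1-ζ)S
  have hB : ∀ y : F, ∃ z ∈ S, ψ y - 1 = (1 - ζ) * z := by
    intro y
    obtain ⟨k, _, hk⟩ := hζ.eq_pow_of_pow_eq_one (hroot y)
    obtain ⟨z, hz, hze⟩ := hA k
    exact ⟨-z, neg_mem hz, by rw [← hk, mul_neg, ← hze]; ring⟩
  -- p lies in (1-ζ)S
  have hC : ∃ z ∈ S, (p : ℂ) = (1 - ζ) * z := by
    have hg : ∑ i ∈ range p, ζ ^ i = 0 := hζ.geom_sum_eq_zero hp2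
    have : (p : ℂ) = ∑ i ∈ range p, ((1 : ℂ) - ζ ^ i) := by
      rw [sum_sub_distrib, hg, sub_zero, sum_const, card_range, nsmul_eq_mul, mul_one]
    choose z hz hze using hA
    refine ⟨∑ i ∈ range p, z i, sum_mem fun i _ => hz i, ?_⟩
    rw [this, mul_sum]
    exact sum_congr rfl fun i _ => hze i
  -- Kl2 ∈ S
  have hmem : Kl2 ψ a ∈ S := sum_mem fun x _ => hval _
  -- card Fˣ
  have hcard : (Fintype.card Fˣ : ℂ) = (p : ℂ) ^ f - 1 := by
    rw [Fintype.card_units, hq]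
    have h1 : 1 ≤ p ^ f := Nat.one_le_pow _ _ hp.pos
    rw [Nat.cast_sub h1]
    push_cast; ring
  -- congruence
  have hcong : ∃ z ∈ S, Kl2 ψ a - (-1) = (1 - ζ) * z := by
    choose zψ hzψ hzψe using hB
    obtain ⟨zp, hzp, hzpe⟩ := hC
    refine ⟨(∑ x : Fˣ, zψ ((x : F) + (a : F) * (x : F)⁻¹)) + zp * (p : ℂ) ^ (f - 1),
      add_mem (sum_mem fun x _ => hzψ _)
        (mul_mem hzp (by exact_mod_cast natCast_mem S (p ^ (f - 1)))), ?_⟩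
    have key : Kl2 ψ a - (-1)
        = (∑ x : Fˣ, (ψ ((x : F) + (a : F) * (x : F)⁻¹) - 1)) + (p : ℂ) ^ f := by
      rw [sum_sub_distrib, sum_const, nsmul_eq_mul, mul_one, Finset.card_univ, hcard]
      unfold Kl2; ring
    rw [key, mul_add]
    congr 1
    · rw [mul_sum]; exact sum_congr rfl fun x _ => hzψe _
    · have : (p : ℂ) ^ f = (p : ℂ) * (p : ℂ) ^ (f - 1) := by
        rw [← pow_succ']
        congr 1
        omega
      rw [this, hzpe]; ring
  refine ⟨hmem, hcong, ?_⟩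
  -- nonvanishing
  intro h0
  obtain ⟨z, hz, hze⟩ := hcong
  rw [h0, zero_sub, neg_neg] at hze
  -- z = aeval ζ g for some integer polynomial g
  have hzadj : z ∈ Algebra.adjoin ℤ ({ζ} : Set ℂ) := by
    rw [Algebra.adjoin_int]; exact hz
  rw [Algebra.adjoin_singleton_eq_range_aeval] at hzadj
  obtain ⟨g, hg⟩ := hzadj
  -- consider h := (1 - X) * g - 1
  set h : Polynomial ℤ := (1 - Polynomial.X) * g - 1 with hh
  have hhζ : Polynomial.aeval ζ h = 0 := by
    have hg' : Polynomial.aeval ζ g = z := hg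
    simp only [hh, map_sub, map_mul, map_one, Polynomial.aeval_X, hg']
    rw [← hze]; ring
  have hint : IsIntegral ℤ ζ := hζ.isIntegral hp.pos
  have hdvd : minpoly ℤ ζ ∣ h := minpoly.isIntegrallyClosed_dvd hint hhζ
  rw [← Polynomial.cyclotomic_eq_minpoly hζ hp.pos] at hdvd
  obtain ⟨k, hk⟩ := hdvd
  have heval := congrArg (Polynomial.eval 1) hk
  rw [Polynomial.eval_mul, Polynomial.eval_one_cyclotomic_prime] at heval
  simp only [hh, Polynomial.eval_sub, Polynomial.eval_mul, Polynomial.eval_one,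
    Polynomial.eval_X, sub_self, zero_mul, zero_sub] at heval
  have : (p : ℤ) ∣ -1 := ⟨Polynomial.eval 1 k, heval⟩
  rw [dvd_neg] at this
  have hle := Int.le_of_dvd one_pos this
  omega
end
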